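/- arXiv:0806.1148 — 2 statements merged into one kernel-verified Lean document; each statement's English description precedes it below -/
import Mathlib

section
/- Let 1 < a < √2 and b = √(a⁴/(a²−1)). Then every k-CNF formula F with occ_F(x) ≤ b^k/(8k) and occ_F(x̄) ≤ a^k/(8k) for all variables x is satisfiable. -/
open scoped Classical

abbrev Var := ℕ
abbrev Lit := Var × Bool
abbrev Clause := Finset Lit
abbrev CNF := Finset Clause

/-- A clause is valid if no variable occurs both positively and negatively. -/
def ClauseValid (C : Clause) : Prop :=
  ∀ x : Var, ¬(((x, true) ∈ C) ∧ ((x, false) ∈ C))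

/-- Assignment `α` satisfies clause `C`. -/
def SatC (α : Var → Bool) (C : Clause) : Prop := ∃ l ∈ C, α l.1 = l.2

/-- A CNF formula is satisfiable. -/
def Satisfiable (F : CNF) : Prop := ∃ α : Var → Bool, ∀ C ∈ F, SatC α C

/-- Two clauses conflict: some variable positive in one, negative in the other. -/
def Conflict (C D : Clause) : Prop :=
  ∃ x : Var, (((x, true) ∈ C) ∧ ((x, false) ∈ D)) ∨ (((x, false) ∈ C) ∧ ((x, true) ∈ D))

/-- Number of clauses of `F` containing the literal `u`. -/
noncomputable def occ (F : CNF) (u : Lit) : ℕ := (F.filter (fun C => u ∈ C)).card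

/-- Number of unordered conflicting pairs of distinct clauses. -/
noncomputable def numConflicts (F : CNF) : ℕ :=
  ((F ×ˢ F).filter (fun p => p.1 ≠ p.2 ∧ Conflict p.1 p.2)).card / 2

/-- `F` is a `k`-CNF formula. -/
def IsKCNF (k : ℕ) (F : CNF) : Prop := ∀ C ∈ F, C.card = k ∧ ClauseValid C

/-- All clauses of `Fp` have exactly `l` literals, all positive. -/
def PosClauses (l : ℕ) (Fp : CNF) : Prop :=
  ∀ C ∈ Fp, C.card = l ∧ ∀ u ∈ C, u.2 = true

/-- All clauses of `Fn` have exactly `k` literals, all negative. -/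
def NegClauses (k : ℕ) (Fn : CNF) : Prop :=
  ∀ C ∈ Fn, C.card = k ∧ ∀ u ∈ C, u.2 = false

/-- The variables occurring in `F`. -/
noncomputable def varsOf (F : CNF) : Finset Var := F.biUnion (fun C => C.image Prod.fst)

/-- All `2^|V|` clauses obtained by disjoining `C` with a full sign pattern on `V`. -/
noncomputable def expansions (C : Clause) (V : Finset Var) : Finset Clause :=
  (Finset.univ : Finset ({x // x ∈ V} → Bool)).image
    (fun s => C ∪ V.attach.image (fun x => (x.1, s x)))

/-- The complete `k`-CNF formula over the variables `0, …, k-1`. -/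
noncomputable def completeCNF (k : ℕ) : CNF := expansions ∅ (Finset.range k)

/-- `G` is a `k`-CNFification of `F`: each clause `C` of `F` is replaced by the
`2^(k - |C|)` expansions of `C` over `k - |C|` fresh variables, fresh per clause. -/
noncomputable def IsKCNFification (k : ℕ) (F G : CNF) : Prop :=
  ∃ Y : Clause → Finset Var,
    (∀ C ∈ F, Disjoint (Y C) (varsOf F)) ∧
    (∀ C ∈ F, ∀ D ∈ F, C ≠ D → Disjoint (Y C) (Y D)) ∧
    (∀ C ∈ F, (Y C).card = k - C.card) ∧
    G = F.biUnion (fun C => expansions C (Y C))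

/-!
Set every variable true independently with probability `τ = 1/a²`. A clause with more than
`k/2` negative literals is first replaced by its negative part, a stronger clause. Afterwards
every clause is falsified with probability at most `a^(-k)`, and at most `b^(-k)` if it has a
positive literal: the choice of `τ` makes `a²τ = 1` and `b²τ(1-τ) = 1`. A clause meets the
clauses conflicting with it through its `k` literals; through a positive literal `x` it meets at
most `occ(x̄) ≤ a^k/(8k)` of them, through a negative one at most `occ(x) ≤ b^k/(8k)` (each
containing the positive literal `x`), so their total falsification probability is at most `1/8`.
Falsifying a clause is negatively correlated with satisfying the clauses it does not conflict
with, and the lopsided local lemma gives a satisfying assignment.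
-/

open Finset

theorem Finset.sum_biUnion_le_sum_sum {ι κ M : Type*} [AddCommMonoid M] [PartialOrder M]
    [IsOrderedAddMonoid M] [DecidableEq κ] {f : κ → M} (hf : ∀ x, 0 ≤ f x) (s : Finset ι)
    (t : ι → Finset κ) : ∑ x ∈ s.biUnion t, f x ≤ ∑ i ∈ s, ∑ x ∈ t i, f x := by
  rw [← sup_eq_biUnion]
  refine apply_sup_le_sum (f := fun u => ∑ x ∈ u, f x) sum_empty (fun {u v} => ?_) s
  rw [sup_eq_union, ← sum_union_inter]
  exact le_add_of_nonneg_right (sum_nonneg fun x _ => hf x)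

section LocalLemma

variable {Ω ι : Type*} [Fintype Ω]

noncomputable def avoiding (A : ι → Finset Ω) (S : Finset ι) : Finset Ω :=
  {ω | ∀ i ∈ S, ω ∉ A i}

variable {A : ι → Finset Ω}

theorem mem_avoiding {S : Finset ι} {ω : Ω} : ω ∈ avoiding A S ↔ ∀ i ∈ S, ω ∉ A i := by
  simp [avoiding]

theorem avoiding_anti {S T : Finset ι} (h : S ⊆ T) : avoiding A T ⊆ avoiding A S :=
  fun _ hω => mem_avoiding.2 fun i hi => mem_avoiding.1 hω i (h hi)

variable [DecidableEq Ω]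

theorem avoiding_insert (i : ι) (S : Finset ι) :
    avoiding A (insert i S) = {ω ∈ avoiding A S | ω ∉ A i} := by
  ext ω
  simp [mem_avoiding, and_comm]

variable {w : Ω → ℝ} {p : ι → ℝ} {Γ : ι → ι → Prop} {I : Finset ι}

-- Lopsidedness handles the events not conflicting with `i`; the conflicting ones cost at most a
-- factor `2`, by the union bound and induction on `S`.
theorem sum_avoiding_filter_mem_le_two_mul (hw : ∀ ω, 0 ≤ w ω) (hp : ∀ i ∈ I, 0 ≤ p i)
    (hΓ : ∀ i ∈ I, ∑ j ∈ I with Γ i j, p j ≤ 1 / 4)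
    (hlop : ∀ i ∈ I, ∀ S ⊆ I, (∀ j ∈ S, ¬ Γ i j) →
      ∑ ω ∈ avoiding A S with ω ∈ A i, w ω ≤ p i * ∑ ω ∈ avoiding A S, w ω) :
    ∀ S ⊆ I, ∀ i ∈ I,
      ∑ ω ∈ avoiding A S with ω ∈ A i, w ω ≤ 2 * p i * ∑ ω ∈ avoiding A S, w ω := by
  intro S
  induction S using Finset.strongInduction with | H S ih => ?_
  intro hSI i hi
  set S₁ := {j ∈ S | Γ i j}
  set S₂ := {j ∈ S | ¬ Γ i j}
  have hS₂I : S₂ ⊆ I := (filter_subset _ _).trans hSI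
  have hcover : avoiding A S₂ \ avoiding A S ⊆
      S₁.biUnion fun j => {ω ∈ avoiding A S₂ | ω ∈ A j} := by
    intro ω hω
    obtain ⟨hω₂, hω⟩ := mem_sdiff.1 hω
    obtain ⟨j, hjS, hjω⟩ : ∃ j ∈ S, ω ∈ A j := by simpa [mem_avoiding] using hω
    have hj : Γ i j := by
      by_contra hj
      exact mem_avoiding.1 hω₂ j (mem_filter.2 ⟨hjS, hj⟩) hjω
    exact mem_biUnion.2 ⟨j, mem_filter.2 ⟨hjS, hj⟩, mem_filter.2 ⟨hω₂, hjω⟩⟩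
  have hS₁ : ∑ j ∈ S₁, 2 * p j ≤ 1 / 2 := by
    have : ∑ j ∈ S₁, p j ≤ ∑ j ∈ I with Γ i j, p j :=
      sum_le_sum_of_subset_of_nonneg (filter_subset_filter _ hSI)
        fun j hj _ => hp j (mem_filter.1 hj).1
    rw [← mul_sum]
    linarith [hΓ i hi]
  have hS₂ : ∑ ω ∈ avoiding A S₂, w ω ≤ 2 * ∑ ω ∈ avoiding A S, w ω := by
    have hsplit := sum_sdiff (f := w) (avoiding_anti (A := A) (filter_subset (¬ Γ i ·) S))
    have hunion : ∑ ω ∈ avoiding A S₂ \ avoiding A S, w ω ≤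
        (∑ j ∈ S₁, 2 * p j) * ∑ ω ∈ avoiding A S₂, w ω := calc
      _ ≤ ∑ ω ∈ S₁.biUnion fun j => {ω ∈ avoiding A S₂ | ω ∈ A j}, w ω :=
        sum_le_sum_of_subset_of_nonneg hcover fun ω _ _ => hw ω
      _ ≤ ∑ j ∈ S₁, ∑ ω ∈ avoiding A S₂ with ω ∈ A j, w ω := sum_biUnion_le_sum_sum hw _ _
      _ ≤ ∑ j ∈ S₁, 2 * p j * ∑ ω ∈ avoiding A S₂, w ω := by
        refine sum_le_sum fun j hj => ih S₂ ?_ hS₂I j (hSI (mem_filter.1 hj).1)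
        refine (ssubset_iff_of_subset (filter_subset _ _)).2 ⟨j, (mem_filter.1 hj).1, ?_⟩
        exact fun hj₂ => (mem_filter.1 hj₂).2 (mem_filter.1 hj).2
      _ = _ := (sum_mul ..).symm
    have h₀ : 0 ≤ ∑ ω ∈ avoiding A S₂, w ω := sum_nonneg fun ω _ => hw ω
    nlinarith
  calc ∑ ω ∈ avoiding A S with ω ∈ A i, w ω
      ≤ ∑ ω ∈ avoiding A S₂ with ω ∈ A i, w ω :=
        sum_le_sum_of_subset_of_nonneg (filter_subset_filter _ (avoiding_anti (filter_subset _ _)))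
          fun ω _ _ => hw ω
    _ ≤ p i * ∑ ω ∈ avoiding A S₂, w ω :=
        hlop i hi S₂ hS₂I fun j hj => (mem_filter.1 hj).2
    _ ≤ p i * (2 * ∑ ω ∈ avoiding A S, w ω) := mul_le_mul_of_nonneg_left hS₂ (hp i hi)
    _ = 2 * p i * ∑ ω ∈ avoiding A S, w ω := by ring

theorem exists_forall_notMem_of_lopsided (hw : ∀ ω, 0 ≤ w ω) (hw₀ : 0 < ∑ ω, w ω)
    (hp : ∀ i ∈ I, 0 ≤ p i) (hp_lt : ∀ i ∈ I, p i < 1 / 2)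
    (hΓ : ∀ i ∈ I, ∑ j ∈ I with Γ i j, p j ≤ 1 / 4)
    (hlop : ∀ i ∈ I, ∀ S ⊆ I, (∀ j ∈ S, ¬ Γ i j) →
      ∑ ω ∈ avoiding A S with ω ∈ A i, w ω ≤ p i * ∑ ω ∈ avoiding A S, w ω) :
    ∃ ω, ∀ i ∈ I, ω ∉ A i := by
  have hpos : ∀ S ⊆ I, 0 < ∑ ω ∈ avoiding A S, w ω := by
    intro S
    induction S using Finset.induction_on with
    | empty => simpa [avoiding] using hw₀
    | insert i S _ ih =>
      intro hSI
      have hiI := hSI (mem_insert_self i S)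
      have hS := ih ((subset_insert i S).trans hSI)
      have hbad := sum_avoiding_filter_mem_le_two_mul hw hp hΓ hlop S
        ((subset_insert i S).trans hSI) i hiI
      have hsplit := sum_filter_add_sum_filter_not (avoiding A S) (· ∈ A i) w
      rw [avoiding_insert]
      nlinarith [hp_lt i hiI]
  obtain ⟨ω, hω⟩ := nonempty_of_sum_ne_zero (hpos I subset_rfl).ne'
  exact ⟨ω, mem_avoiding.1 hω⟩

end LocalLemma

section BiasedAssignment

def bias (τ : ℝ) (b : Bool) : ℝ := if b then τ else 1 - τ

def biasWeight {ι : Type*} [Fintype ι] (τ : ℝ) (β : ι → Bool) : ℝ := ∏ i, bias τ (β i)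

variable {τ : ℝ}

theorem bias_nonneg (hτ₀ : 0 ≤ τ) (hτ₁ : τ ≤ 1) (b : Bool) : 0 ≤ bias τ b := by
  cases b <;> simp [bias] <;> linarith

theorem bias_add_bias_not (b : Bool) : bias τ b + bias τ (!b) = 1 := by
  cases b <;> simp [bias]

variable {ι : Type*} [Fintype ι]

theorem biasWeight_nonneg (hτ₀ : 0 ≤ τ) (hτ₁ : τ ≤ 1) (β : ι → Bool) : 0 ≤ biasWeight τ β :=
  prod_nonneg fun i _ => bias_nonneg hτ₀ hτ₁ (β i)

variable [DecidableEq ι]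

theorem sum_biasWeight : ∑ β : ι → Bool, biasWeight τ β = 1 := calc
  _ = ∏ _i : ι, ∑ b, bias τ b := (Fintype.prod_sum fun _ b => bias τ b).symm
  _ = 1 := by simp [bias]

theorem biasWeight_funSplitAt_symm (i : ι) (b : Bool) (γ : {j // j ≠ i} → Bool) :
    biasWeight τ ((Equiv.funSplitAt i Bool).symm (b, γ)) = bias τ b * biasWeight τ γ := by
  rw [biasWeight, Fintype.prod_eq_mul_prod_subtype_ne _ i]
  congr 1
  · simp [Equiv.funSplitAt, Equiv.piSplitAt]
  · exact prod_congr rfl fun j _ => by simp [Equiv.funSplitAt, Equiv.piSplitAt, j.2]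

omit [Fintype ι] in
theorem update_funSplitAt_symm (i : ι) (b c : Bool) (γ : {j // j ≠ i} → Bool) :
    Function.update ((Equiv.funSplitAt i Bool).symm (b, γ)) i c =
      (Equiv.funSplitAt i Bool).symm (c, γ) := by
  ext j
  by_cases hj : j = i
  · subst hj; simp [Equiv.funSplitAt, Equiv.piSplitAt]
  · simp [Equiv.funSplitAt, Equiv.piSplitAt, hj]

theorem sum_filter_apply_eq_le (hτ₀ : 0 ≤ τ) (hτ₁ : τ ≤ 1)
    (E : Finset (ι → Bool)) (i : ι) (c : Bool)
    (hE : ∀ β, Function.update β i c ∈ E → Function.update β i (!c) ∈ E) :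
    ∑ β ∈ E with β i = c, biasWeight τ β ≤ bias τ c * ∑ β ∈ E, biasWeight τ β := by
  set e := (Equiv.funSplitAt i Bool).symm
  have hsplit : ∀ g : (ι → Bool) → ℝ, ∑ β ∈ E, g β =
      ∑ γ, ((if e (c, γ) ∈ E then g (e (c, γ)) else 0) +
        (if e (!c, γ) ∈ E then g (e (!c, γ)) else 0)) := by
    intro g
    rw [← univ_inter E, ← sum_ite_mem, ← e.sum_comp, Fintype.sum_prod_type, sum_comm]
    cases c <;> simp [add_comm]
  have he : ∀ b γ, e (b, γ) i = b := fun b γ => by simp [e, Equiv.funSplitAt, Equiv.piSplitAt]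
  have hw : ∀ b γ, biasWeight τ (e (b, γ)) = bias τ b * biasWeight τ γ :=
    biasWeight_funSplitAt_symm i
  have hupd : ∀ b γ, Function.update (e (c, γ)) i b = e (b, γ) := update_funSplitAt_symm i c
  rw [sum_filter, hsplit, hsplit, mul_sum]
  refine sum_le_sum fun γ _ => ?_
  simp only [he, Bool.not_ne_self, if_true, if_false, ite_self, add_zero]
  by_cases hc : e (c, γ) ∈ E
  · have hc' : e (!c, γ) ∈ E := by simpa only [hupd] using hE (e (c, γ)) (by rwa [hupd])
    rw [if_pos hc, if_pos hc', hw, hw, ← add_mul, bias_add_bias_not, one_mul]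
  · rw [if_neg hc, zero_add]
    split_ifs
    · rw [hw]
      exact mul_nonneg (bias_nonneg hτ₀ hτ₁ c)
        (mul_nonneg (bias_nonneg hτ₀ hτ₁ _) (biasWeight_nonneg hτ₀ hτ₁ γ))
    · simp

end BiasedAssignment

section Clauses

theorem SatC.mono {α : Var → Bool} {C D : Clause} (h : SatC α C) (hCD : C ⊆ D) : SatC α D :=
  let ⟨l, hl, hα⟩ := h
  ⟨l, hCD hl, hα⟩

theorem satC_insert {α : Var → Bool} {l : Lit} {C : Clause} :
    SatC α (insert l C) ↔ α l.1 = l.2 ∨ SatC α C := by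
  simp [SatC]

theorem SatC.update_of_notMem {α : Var → Bool} {v : Var} {b : Bool} {C : Clause}
    (hC : (v, b) ∉ C) (h : SatC (Function.update α v b) C) (b' : Bool) :
    SatC (Function.update α v b') C := by
  obtain ⟨m, hm, hmα⟩ := h
  refine ⟨m, hm, ?_⟩
  by_cases hmv : m.1 = v
  · rw [hmv, Function.update_self] at hmα
    exact absurd (by rw [← hmv, hmα]; exact hm) hC
  · rwa [Function.update_of_ne hmv] at hmα ⊢

theorem conflict_of_mem {C D : Clause} {l : Lit} (hC : l ∈ C) (hD : (l.1, !l.2) ∈ D) :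
    Conflict C D := by
  obtain ⟨x, _ | _⟩ := l
  exacts [⟨x, .inr ⟨hC, hD⟩⟩, ⟨x, .inl ⟨hC, hD⟩⟩]

theorem Conflict.exists_mem {C D : Clause} (h : Conflict C D) : ∃ l ∈ C, (l.1, !l.2) ∈ D := by
  obtain ⟨x, ⟨hC, hD⟩ | ⟨hC, hD⟩⟩ := h
  exacts [⟨_, hC, hD⟩, ⟨_, hC, hD⟩]

theorem mem_varsOf {F : CNF} {C : Clause} {l : Lit} (hC : C ∈ F) (hl : l ∈ C) :
    l.1 ∈ varsOf F :=
  mem_biUnion.2 ⟨C, hC, mem_image_of_mem _ hl⟩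

variable {V : Finset Var}

def extendAssignment (V : Finset Var) (β : V → Bool) (x : Var) : Bool :=
  if h : x ∈ V then β ⟨x, h⟩ else true

theorem extendAssignment_update (β : V → Bool) (x : V) (b : Bool) :
    extendAssignment V (Function.update β x b) =
      Function.update (extendAssignment V β) x.1 b := by
  ext y
  by_cases hy : y = x.1
  · subst hy; simp [extendAssignment]
  · by_cases hyV : y ∈ V
    · have : (⟨y, hyV⟩ : V) ≠ x := fun h => hy (congrArg Subtype.val h)
      simp [extendAssignment, hyV, hy, Function.update_of_ne this]
    · simp [extendAssignment, hyV, hy]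

noncomputable def falsifiers (V : Finset Var) (C : Clause) : Finset (V → Bool) :=
  {β | ¬ SatC (extendAssignment V β) C}

theorem mem_falsifiers {C : Clause} {β : V → Bool} :
    β ∈ falsifiers V C ↔ ¬ SatC (extendAssignment V β) C := by
  simp [falsifiers]

theorem falsifiers_insert {l : Lit} (hl : l.1 ∈ V) (C : Clause) :
    falsifiers V (insert l C) = {β ∈ falsifiers V C | β ⟨l.1, hl⟩ = !l.2} := by
  ext β
  simp [mem_falsifiers, satC_insert, extendAssignment, hl, and_comm, ← Bool.eq_not]

def falsifyProb (τ : ℝ) (C : Clause) : ℝ := ∏ l ∈ C, bias τ (!l.2)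

variable {τ : ℝ}

theorem falsifyProb_nonneg (hτ₀ : 0 ≤ τ) (hτ₁ : τ ≤ 1) (C : Clause) : 0 ≤ falsifyProb τ C :=
  prod_nonneg fun _ _ => bias_nonneg hτ₀ hτ₁ _

-- Switching a variable so as to falsify `C` can only falsify clauses that conflict with `C`.
theorem sum_avoiding_filter_mem_falsifiers_le {ι : Type*} (hτ₀ : 0 ≤ τ) (hτ₁ : τ ≤ 1)
    (f : ι → Clause) (S : Finset ι) {C : Clause} (hCV : ∀ l ∈ C, l.1 ∈ V)
    (hS : ∀ j ∈ S, ¬ Conflict C (f j)) :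
    ∑ β ∈ avoiding (fun j => falsifiers V (f j)) S with β ∈ falsifiers V C, biasWeight τ β ≤
      falsifyProb τ C * ∑ β ∈ avoiding (fun j => falsifiers V (f j)) S, biasWeight τ β := by
  induction C using Finset.induction_on with
  | empty => simp [falsifiers, SatC, falsifyProb]
  | insert l C hl ih =>
    have hlV := hCV l (mem_insert_self l C)
    set E := {β ∈ avoiding (fun j => falsifiers V (f j)) S | β ∈ falsifiers V C}
    have hE : ∀ β, Function.update β ⟨l.1, hlV⟩ (!l.2) ∈ E →
        Function.update β ⟨l.1, hlV⟩ (!!l.2) ∈ E := by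
      intro β hβ
      simp only [E, mem_filter, mem_avoiding, mem_falsifiers, extendAssignment_update,
        Bool.not_not, not_not] at hβ ⊢
      refine ⟨fun j hj => (hβ.1 j hj).update_of_notMem ?_ l.2, fun hsat => hβ.2 ?_⟩
      · exact fun hmem => hS j hj (conflict_of_mem (mem_insert_self l C) hmem)
      · exact hsat.update_of_notMem hl (!l.2)
    have hτl := bias_nonneg hτ₀ hτ₁ (!l.2)
    have hsplit : {β ∈ avoiding (fun j => falsifiers V (f j)) S | β ∈ falsifiers V (insert l C)} =
        {β ∈ E | β ⟨l.1, hlV⟩ = !l.2} := by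
      ext β
      simp [E, falsifiers_insert hlV, and_assoc]
    have hSC : ∀ j ∈ S, ¬ Conflict C (f j) := fun j hj hconf =>
      let ⟨m, hm, hmf⟩ := hconf.exists_mem
      hS j hj (conflict_of_mem (mem_insert_of_mem hm) hmf)
    rw [hsplit]
    calc _ ≤ bias τ (!l.2) * ∑ β ∈ E, biasWeight τ β := sum_filter_apply_eq_le hτ₀ hτ₁ E _ _ hE
      _ ≤ bias τ (!l.2) * (falsifyProb τ C *
            ∑ β ∈ avoiding (fun j => falsifiers V (f j)) S, biasWeight τ β) :=
        mul_le_mul_of_nonneg_left (ih (fun m hm => hCV m (mem_insert_of_mem hm)) hSC) hτl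
      _ = _ := by simp only [falsifyProb, prod_insert hl]; ring

theorem satisfiable_of_lopsided (hτ₀ : 0 ≤ τ) (hτ₁ : τ ≤ 1) {F : CNF}
    {f : Clause → Clause} (hf : ∀ C ∈ F, f C ⊆ C)
    (hp : ∀ C ∈ F, falsifyProb τ (f C) < 1 / 2)
    (hΓ : ∀ C ∈ F, ∑ D ∈ F with Conflict (f C) (f D), falsifyProb τ (f D) ≤ 1 / 4) :
    Satisfiable F := by
  have hlop : ∀ C ∈ F, ∀ S ⊆ F, (∀ D ∈ S, ¬ Conflict (f C) (f D)) →
      ∑ β ∈ avoiding (fun D => falsifiers (varsOf F) (f D)) S with β ∈ falsifiers (varsOf F) (f C),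
        biasWeight τ β ≤ falsifyProb τ (f C) *
          ∑ β ∈ avoiding (fun D => falsifiers (varsOf F) (f D)) S, biasWeight τ β :=
    fun C hC S _ hS => sum_avoiding_filter_mem_falsifiers_le hτ₀ hτ₁ f S
      (fun l hl => mem_varsOf hC (hf C hC hl)) hS
  obtain ⟨β, hβ⟩ := exists_forall_notMem_of_lopsided (biasWeight_nonneg hτ₀ hτ₁)
    (by rw [sum_biasWeight]; exact one_pos) (fun C _ => falsifyProb_nonneg hτ₀ hτ₁ _) hp hΓ hlop
  refine ⟨extendAssignment _ β, fun C hC => SatC.mono ?_ (hf C hC)⟩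
  simpa [mem_falsifiers] using hβ C hC

theorem sum_filter_mem_falsifyProb_le {F : CNF} {f : Clause → Clause}
    (hf : ∀ C ∈ F, f C ⊆ C) {u : Lit} {M r : ℝ} (hM : 0 < M)
    (hMf : ∀ C ∈ F, u ∈ f C → M * falsifyProb τ (f C) ≤ 1) (hocc : (occ F u : ℝ) ≤ M * r) :
    ∑ C ∈ F with u ∈ f C, falsifyProb τ (f C) ≤ r := by
  have hcard : #{C ∈ F | u ∈ f C} ≤ occ F u :=
    card_le_card (monotone_filter_right F fun C hC hu => hf C hC hu)
  calc _ ≤ #{C ∈ F | u ∈ f C} • (1 / M) := sum_le_card_nsmul _ _ _ fun C hC =>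
        (le_div_iff₀' hM).2 (hMf C (mem_filter.1 hC).1 (mem_filter.1 hC).2)
    _ ≤ occ F u * (1 / M) := by rw [nsmul_eq_mul]; gcongr
    _ ≤ r := by rw [mul_one_div, div_le_iff₀' hM]; exact hocc

theorem sum_filter_conflict_le {F : CNF} {f : Clause → Clause} {g : Clause → ℝ}
    (hg : ∀ D, 0 ≤ g D) (C : Clause) :
    ∑ D ∈ F with Conflict C (f D), g D ≤ ∑ l ∈ C, ∑ D ∈ F with (l.1, !l.2) ∈ f D, g D := calc
  _ ≤ ∑ D ∈ C.biUnion fun l => {D ∈ F | (l.1, !l.2) ∈ f D}, g D := by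
    refine sum_le_sum_of_subset_of_nonneg (fun D hD => ?_) fun D _ _ => hg D
    obtain ⟨hDF, hconf⟩ := mem_filter.1 hD
    obtain ⟨l, hl, hlD⟩ := hconf.exists_mem
    exact mem_biUnion.2 ⟨l, hl, mem_filter.2 ⟨hDF, hlD⟩⟩
  _ ≤ _ := sum_biUnion_le_sum_sum hg _ _

end Clauses

section Shrinking

def negLits (C : Clause) : Clause := {l ∈ C | l.2 = false}

def shrink (k : ℕ) (C : Clause) : Clause := if k < 2 * #(negLits C) then negLits C else C

variable {k : ℕ} {C : Clause}

theorem shrink_subset : shrink k C ⊆ C := by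
  unfold shrink; split_ifs
  · exact filter_subset _ _
  · exact subset_rfl

theorem shrink_nonempty (hC : C.Nonempty) : (shrink k C).Nonempty := by
  unfold shrink; split_ifs with h
  · exact card_pos.1 (by omega)
  · exact hC

theorem shrink_eq_self_of_mem {u : Lit} (hu : u ∈ shrink k C) (hu₂ : u.2 = true) :
    shrink k C = C ∧ 2 * #(negLits C) ≤ k := by
  unfold shrink at hu ⊢
  split_ifs at hu ⊢ with h
  · simp [negLits, hu₂] at hu
  · exact ⟨rfl, by omega⟩

variable {τ c : ℝ}

theorem falsifyProb_eq :
    falsifyProb τ C = τ ^ #(negLits C) * (1 - τ) ^ (#C - #(negLits C)) := by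
  have hneg : ∏ l ∈ negLits C, bias τ (!l.2) = τ ^ #(negLits C) :=
    prod_eq_pow_card fun l hl => by simp [(mem_filter.1 hl).2, bias]
  have hpos : ∏ l ∈ C with ¬ l.2 = false, bias τ (!l.2) = (1 - τ) ^ #{l ∈ C | ¬ l.2 = false} :=
    prod_eq_pow_card fun l hl => by simp [(mem_filter.1 hl).2, bias]
  have hcard := card_filter_add_card_filter_not (s := C) (fun l => l.2 = false)
  rw [falsifyProb, ← prod_filter_mul_prod_filter_not C (fun l => l.2 = false), ← negLits, hneg, hpos,
    negLits]
  congr 2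
  omega

theorem pow_card_mul_falsifyProb_le_one (hτ₀ : 0 ≤ τ) (hτ₁ : τ ≤ 1) (hc : 0 ≤ c)
    (h₂ : c ^ 2 * (τ * (1 - τ)) ≤ 1) (h₁ : c * (1 - τ) ≤ 1) (hC : 2 * #(negLits C) ≤ #C) :
    c ^ #C * falsifyProb τ C ≤ 1 := by
  obtain ⟨r, hr⟩ := Nat.exists_eq_add_of_le hC
  have : c ^ #C * falsifyProb τ C = (c ^ 2 * (τ * (1 - τ))) ^ #(negLits C) * (c * (1 - τ)) ^ r := by
    rw [falsifyProb_eq, hr, show 2 * #(negLits C) + r - #(negLits C) = #(negLits C) + r by omega,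
      pow_add, pow_add, pow_mul, mul_pow, mul_pow, mul_pow]
    ring
  have hσ : 0 ≤ 1 - τ := sub_nonneg.2 hτ₁
  rw [this]
  exact mul_le_one₀ (pow_le_one₀ (by positivity) h₂) (by positivity)
    (pow_le_one₀ (by positivity) h₁)

theorem pow_mul_falsifyProb_negLits_le_one (hτ₀ : 0 ≤ τ) (hc : 1 ≤ c) (hcτ : c ^ 2 * τ ≤ 1)
    (hk : k ≤ 2 * #(negLits C)) : c ^ k * falsifyProb τ (negLits C) ≤ 1 := by
  have hneg : negLits (negLits C) = negLits C := by simp [negLits, filter_filter]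
  rw [falsifyProb_eq, hneg, Nat.sub_self, pow_zero, mul_one]
  calc c ^ k * τ ^ #(negLits C) ≤ c ^ (2 * #(negLits C)) * τ ^ #(negLits C) :=
        mul_le_mul_of_nonneg_right (pow_le_pow_right₀ hc hk) (by positivity)
    _ = (c ^ 2 * τ) ^ #(negLits C) := by rw [pow_mul, mul_pow]
    _ ≤ 1 := pow_le_one₀ (by positivity) hcτ

theorem pow_mul_falsifyProb_shrink_le_one (hC : #C = k)
    (hτ₀ : 0 ≤ τ) (hτ₁ : τ ≤ 1) (hc : 1 ≤ c) (hcτ : c ^ 2 * τ ≤ 1) (hcσ : c * (1 - τ) ≤ 1) :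
    c ^ k * falsifyProb τ (shrink k C) ≤ 1 := by
  unfold shrink
  split_ifs with h
  · exact pow_mul_falsifyProb_negLits_le_one hτ₀ hc hcτ h.le
  · have hcτσ : c ^ 2 * (τ * (1 - τ)) ≤ 1 := by
      rw [← mul_assoc]
      exact (mul_le_of_le_one_right (by positivity) (by linarith)).trans hcτ
    rw [← hC]
    exact pow_card_mul_falsifyProb_le_one hτ₀ hτ₁ (by linarith) hcτσ hcσ (by omega)


theorem sum_filter_mem_falsifyProb_shrink_le {a b : ℝ} {F : CNF} (hF : ∀ C ∈ F, #C = k)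
    (hτ₀ : 0 ≤ τ) (hτ₁ : τ ≤ 1) (ha : 1 ≤ a) (haτ : a ^ 2 * τ ≤ 1) (haσ : a * (1 - τ) ≤ 1)
    (hb : 0 < b) (hbτσ : b ^ 2 * (τ * (1 - τ)) ≤ 1) (hbσ : b * (1 - τ) ≤ 1)
    (hocc : ∀ x : Var, (occ F (x, true) : ℝ) ≤ b ^ k / (8 * k) ∧
      (occ F (x, false) : ℝ) ≤ a ^ k / (8 * k)) (u : Lit) :
    ∑ C ∈ F with u ∈ shrink k C, falsifyProb τ (shrink k C) ≤ 1 / (8 * k) := by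
  obtain ⟨x, _ | _⟩ := u
  · refine sum_filter_mem_falsifyProb_le (M := a ^ k) (fun _ _ => shrink_subset) (by positivity)
      (fun C hC _ => pow_mul_falsifyProb_shrink_le_one (hF C hC) hτ₀ hτ₁ ha haτ haσ)
      (by rw [mul_one_div]; exact (hocc x).2)
  · refine sum_filter_mem_falsifyProb_le (M := b ^ k) (fun _ _ => shrink_subset) (by positivity)
      (fun C hC hu => ?_) (by rw [mul_one_div]; exact (hocc x).1)
    obtain ⟨hshrink, hneg⟩ := shrink_eq_self_of_mem hu rfl
    rw [hshrink, ← hF C hC]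
    exact pow_card_mul_falsifyProb_le_one hτ₀ hτ₁ hb.le hbτσ hbσ (by rwa [hF C hC])

end Shrinking

theorem bias_bounds_of_lt_sqrt_two {a τ : ℝ} (ha₁ : 1 < a) (ha₂ : a < √2) (hτ : a ^ 2 * τ = 1) :
    1 / 2 ≤ τ ∧ τ < 1 ∧ a * (1 - τ) ≤ 1 := by
  have ha₂' : a ^ 2 < 2 := (Real.lt_sqrt (by linarith)).1 ha₂
  refine ⟨by nlinarith, by nlinarith, by nlinarith⟩

theorem bias_bounds_of_eq_sqrt {a b τ : ℝ} (ha₁ : 1 < a) (hτ : a ^ 2 * τ = 1) (hτ₂ : 1 / 2 ≤ τ)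
    (hb : b = √(a ^ 4 / (a ^ 2 - 1))) :
    0 < b ∧ b ^ 2 * (τ * (1 - τ)) = 1 ∧ b * (1 - τ) ≤ 1 := by
  have ha : 0 < a ^ 2 - 1 := by nlinarith
  have hb₀ : 0 < b := hb ▸ Real.sqrt_pos.2 (by positivity)
  have hbτσ : b ^ 2 * (τ * (1 - τ)) = 1 := by
    rw [hb, Real.sq_sqrt (by positivity), eq_inv_of_mul_eq_one_right hτ]
    field_simp
  have hsq : (b * (1 - τ)) ^ 2 * τ = 1 - τ := by linear_combination (1 - τ) * hbτσ
  refine ⟨hb₀, hbτσ, ?_⟩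
  nlinarith

/-- Let `1 < a < √2` and `b = √(a⁴/(a²-1))`. Every `k`-CNF formula `F` with
`occ_F(x) ≤ b^k/(8k)` and `occ_F(x̄) ≤ a^k/(8k)` for all `x` is satisfiable. -/
theorem stmt14 (a b : ℝ) (ha1 : 1 < a) (ha2 : a < Real.sqrt 2)
    (hb : b = Real.sqrt (a ^ 4 / (a ^ 2 - 1)))
    (k : ℕ) (hk : 1 ≤ k) (F : CNF) (hF : IsKCNF k F)
    (hocc : ∀ x : Var, (occ F (x, true) : ℝ) ≤ b ^ k / (8 * k) ∧
                       (occ F (x, false) : ℝ) ≤ a ^ k / (8 * k)) :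
    Satisfiable F := by
  set τ : ℝ := (a ^ 2)⁻¹
  have haτ : a ^ 2 * τ = 1 := mul_inv_cancel₀ (by positivity)
  obtain ⟨hτ₂, hτ₁, haσ⟩ := bias_bounds_of_lt_sqrt_two ha1 ha2 haτ
  obtain ⟨hb₀, hbτσ, hbσ⟩ := bias_bounds_of_eq_sqrt ha1 haτ hτ₂ hb
  have hτ₀ : 0 ≤ τ := by linarith
  have hsum := sum_filter_mem_falsifyProb_shrink_le (fun C hC => (hF C hC).1) hτ₀ hτ₁.le ha1.le
    haτ.le haσ hb₀ hbτσ.le hbσ hocc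
  have hk₀ : (1 : ℝ) ≤ k := by exact_mod_cast hk
  refine satisfiable_of_lopsided (f := shrink k) hτ₀ hτ₁.le (fun _ _ => shrink_subset)
    (fun C hC => ?_) fun C hC => ?_
  · obtain ⟨u, hu⟩ := shrink_nonempty (k := k) (card_pos.1 (by rw [(hF C hC).1]; exact hk))
    calc falsifyProb τ (shrink k C)
        ≤ ∑ D ∈ F with u ∈ shrink k D, falsifyProb τ (shrink k D) :=
          single_le_sum (fun D _ => falsifyProb_nonneg hτ₀ hτ₁.le _) (mem_filter.2 ⟨hC, hu⟩)
      _ ≤ 1 / (8 * k) := hsum u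
      _ < 1 / 2 := by gcongr; linarith
  · calc _ ≤ ∑ l ∈ shrink k C, ∑ D ∈ F with (l.1, !l.2) ∈ shrink k D, falsifyProb τ (shrink k D) :=
          sum_filter_conflict_le (fun _ => falsifyProb_nonneg hτ₀ hτ₁.le _) _
      _ ≤ #(shrink k C) • (1 / (8 * k)) := sum_le_card_nsmul _ _ _ fun l _ => hsum _
      _ ≤ k * (1 / (8 * k)) := by
          rw [nsmul_eq_mul]
          gcongr
          exact_mod_cast (card_le_card shrink_subset).trans (hF C hC).1.le
      _ = 1 / 8 := by field_simp
      _ ≤ 1 / 4 := by norm_num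
end

section
/- There exists a constant C such that for all sufficiently large k there is an unsatisfiable k-CNF formula F with occ_F(x)·occ_F(x̄) ≤ C·3.01^k for every variable x. -/
/-!
The formula lives on `n = 41 k²` main variables. By a union bound there are about
`(41/7)^l` sets `fᵢ` of size `l = ⌈7k/34⌉` such that every set of at least `7k²` main
variables contains some `fᵢ`, and about `(41/34)^k` sets `gⱼ` of size `k` such that every set
of fewer than `7k²` main variables misses some `gⱼ`. Take the negative clauses on the `gⱼ`, and
the positive clauses on the `fᵢ`, each padded to width `k` in all `2^(k-l)` ways with fresh
variables. An assignment sets either at least `7k²` main variables false, and then falsifies a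
padded copy of some positive clause, or fewer, and then falsifies some negative clause.
A main variable occurs about `(41/7)^l · 2^(k-l)` times positively and `(41/34)^k` times
negatively, a product of `poly(k) · ((41/14)^(7/34) · 41/17)^k ≤ poly(k) · 3.009^k`; a padding
variable occurs at most `2^(k-l)` times with each sign, and `4^(1 - 7/34) < 3.01`.
-/

open scoped Classical

open Finset

section Occurrences

lemma occ_le_card (F : CNF) (u : Lit) : occ F u ≤ F.card :=
  card_filter_le _ _

lemma occ_eq_zero {F : CNF} {u : Lit} (h : ∀ C ∈ F, u ∉ C) : occ F u = 0 :=
  card_eq_zero.2 (filter_eq_empty_iff.2 h)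

lemma occ_union_le (F G : CNF) (u : Lit) : occ (F ∪ G) u ≤ occ F u + occ G u := by
  unfold occ
  rw [filter_union]
  exact card_union_le _ _

lemma occ_biUnion_le {ι : Type*} (s : Finset ι) (F : ι → CNF) (u : Lit) :
    occ (s.biUnion F) u ≤ ∑ i ∈ s, occ (F i) u := by
  unfold occ
  rw [filter_biUnion]
  exact card_biUnion_le

end Occurrences

section Expansions

variable {C D : Clause} {V : Finset Var}

lemma mem_expansions :
    D ∈ expansions C V ↔
      ∃ s : V → Bool, C ∪ V.attach.image (fun x => (x.1, s x)) = D := by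
  simp [expansions]

lemma mem_or_mem_of_mem_expansions {u : Lit} (hD : D ∈ expansions C V) (hu : u ∈ D) :
    u ∈ C ∨ u.1 ∈ V := by
  obtain ⟨s, rfl⟩ := mem_expansions.1 hD
  rcases mem_union.1 hu with hu | hu
  · exact Or.inl hu
  · obtain ⟨x, -, rfl⟩ := mem_image.1 hu
    exact Or.inr x.2

lemma card_expansions_le : (expansions C V).card ≤ 2 ^ V.card :=
  card_image_le.trans (by simp)

lemma card_of_mem_expansions (hCV : ∀ u ∈ C, u.1 ∉ V) (hD : D ∈ expansions C V) :
    D.card = C.card + V.card := by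
  obtain ⟨s, rfl⟩ := mem_expansions.1 hD
  have hdisj : Disjoint C (V.attach.image fun x => (x.1, s x)) := by
    refine disjoint_left.2 fun u hu hu' => ?_
    obtain ⟨x, -, rfl⟩ := mem_image.1 hu'
    exact hCV _ hu x.2
  rw [card_union_of_disjoint hdisj,
    card_image_of_injective _ fun x y h => Subtype.ext (congrArg Prod.fst h), card_attach]

lemma clauseValid_of_mem_expansions (hC : ClauseValid C) (hCV : ∀ u ∈ C, u.1 ∉ V)
    (hD : D ∈ expansions C V) : ClauseValid D := by
  obtain ⟨s, rfl⟩ := mem_expansions.1 hD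
  rintro x ⟨ht, hf⟩
  simp only [mem_union, mem_image, mem_attach, true_and, Prod.mk.injEq] at ht hf
  rcases ht with ht | ⟨y, rfl, hy⟩ <;> rcases hf with hf | ⟨z, hz, hz'⟩
  · exact hC x ⟨ht, hf⟩
  · exact hCV _ ht (hz ▸ z.2)
  · exact hCV _ hf y.2
  · rw [Subtype.ext hz] at hz'
    exact Bool.noConfusion (hy.symm.trans hz')

/-- Choosing the sign pattern on `V` that `α` falsifies shows that `α` must satisfy `C` itself. -/
lemma satC_of_forall_mem_expansions {α : Var → Bool} (h : ∀ D ∈ expansions C V, SatC α D) :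
    SatC α C := by
  obtain ⟨u, hu, hαu⟩ := h _ (mem_expansions.2 ⟨fun x => !α x, rfl⟩)
  rcases mem_union.1 hu with hu | hu
  · exact ⟨u, hu, hαu⟩
  · obtain ⟨x, -, rfl⟩ := mem_image.1 hu
    simp at hαu

end Expansions

section Construction

def litClause (b : Bool) (A : Finset Var) : Clause := A.image fun x => (x, b)

lemma mem_litClause {b : Bool} {A : Finset Var} {u : Lit} :
    u ∈ litClause b A ↔ u.1 ∈ A ∧ u.2 = b := by
  obtain ⟨x, c⟩ := u
  simp [litClause, and_comm, eq_comm]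

lemma card_litClause (b : Bool) (A : Finset Var) : (litClause b A).card = A.card :=
  card_image_of_injective _ fun _ _ h => congrArg Prod.fst h

lemma clauseValid_litClause (b : Bool) (A : Finset Var) : ClauseValid (litClause b A) := by
  rintro x ⟨ht, hf⟩
  exact Bool.noConfusion ((mem_litClause.1 ht).2.trans (mem_litClause.1 hf).2.symm)

/-- Padding variables of the `i`-th positive clause; `Nat.pair` keeps them disjoint for
distinct `i`. -/
def padVars (n m i : ℕ) : Finset Var := (range m).image fun t => n + Nat.pair i t

lemma card_padVars (n m i : ℕ) : (padVars n m i).card = m := by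
  have hinj : Function.Injective fun t => n + Nat.pair i t := fun s t h =>
    (Nat.pair_eq_pair.1 (Nat.add_left_cancel h)).2
  rw [padVars, card_image_of_injective _ hinj, card_range]

lemma le_of_mem_padVars {n m i x : ℕ} (hx : x ∈ padVars n m i) : n ≤ x := by
  obtain ⟨t, -, rfl⟩ := mem_image.1 hx
  exact Nat.le_add_right _ _

lemma eq_of_mem_padVars {n m i j x : ℕ} (hi : x ∈ padVars n m i) (hj : x ∈ padVars n m j) :
    i = j := by
  obtain ⟨s, -, rfl⟩ := mem_image.1 hi
  obtain ⟨t, -, h⟩ := mem_image.1 hj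
  exact (Nat.pair_eq_pair.1 (Nat.add_left_cancel h)).1.symm

variable (n m : ℕ) {P N : ℕ} (f : Fin P → Finset Var) (g : Fin N → Finset Var)

noncomputable def negClauses : CNF := univ.image fun j => litClause false (g j)

noncomputable def paddedPosClauses : CNF :=
  univ.biUnion fun i => expansions (litClause true (f i)) (padVars n m i)

noncomputable def thresholdCNF : CNF := negClauses g ∪ paddedPosClauses n m f

variable {n m f g}

lemma card_negClauses_le : (negClauses g).card ≤ N :=
  card_image_le.trans (by simp)

lemma card_paddedPosClauses_le : (paddedPosClauses n m f).card ≤ P * 2 ^ m := by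
  calc (paddedPosClauses n m f).card
      ≤ ∑ i, (expansions (litClause true (f i)) (padVars n m i)).card := card_biUnion_le
    _ ≤ ∑ _i : Fin P, 2 ^ m :=
        sum_le_sum fun i _ => (card_expansions_le).trans_eq (by rw [card_padVars])
    _ = P * 2 ^ m := by simp

lemma occ_negClauses_true (x : Var) : occ (negClauses g) (x, true) = 0 :=
  occ_eq_zero fun C hC hx => by
    obtain ⟨j, -, rfl⟩ := mem_image.1 hC
    exact Bool.noConfusion (mem_litClause.1 hx).2

lemma occ_negClauses_eq_zero (hg : ∀ j, g j ⊆ range n) {x : Var} (hx : n ≤ x) (b : Bool) :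
    occ (negClauses g) (x, b) = 0 :=
  occ_eq_zero fun C hC hxC => by
    obtain ⟨j, -, rfl⟩ := mem_image.1 hC
    have := mem_range.1 (hg j (mem_litClause.1 hxC).1)
    omega

lemma posVars_disjoint_padVars (hf : ∀ i, f i ⊆ range n) (i : Fin P) :
    ∀ u ∈ litClause true (f i), u.1 ∉ padVars n m i := fun u hu hpad => by
  have := mem_range.1 (hf i (mem_litClause.1 hu).1)
  have := le_of_mem_padVars hpad
  omega

lemma occ_paddedPosClauses_false {x : Var} (hx : ∀ i, x ∉ padVars n m i) :
    occ (paddedPosClauses n m f) (x, false) = 0 :=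
  occ_eq_zero fun C hC hxC => by
    obtain ⟨i, -, hC⟩ := mem_biUnion.1 hC
    rcases mem_or_mem_of_mem_expansions hC hxC with h | h
    · exact Bool.noConfusion (mem_litClause.1 h).2
    · exact hx i h

lemma occ_paddedPosClauses_le (hf : ∀ i, f i ⊆ range n) {x : Var} (hx : n ≤ x) (b : Bool) :
    occ (paddedPosClauses n m f) (x, b) ≤ 2 ^ m := by
  have hzero : ∀ i : Fin P, x ∉ padVars n m i →
      occ (expansions (litClause true (f i)) (padVars n m i)) (x, b) = 0 :=
    fun i hi => occ_eq_zero fun C hC hxC => by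
      rcases mem_or_mem_of_mem_expansions hC hxC with h | h
      · have := mem_range.1 (hf i (mem_litClause.1 h).1)
        omega
      · exact hi h
  refine (occ_biUnion_le _ _ _).trans ?_
  by_cases hpad : ∃ i : Fin P, x ∈ padVars n m i
  · obtain ⟨i₀, hi₀⟩ := hpad
    rw [sum_eq_single i₀
      (fun i _ hi => hzero i fun hx => hi (Fin.ext (eq_of_mem_padVars hx hi₀))) (by simp)]
    exact (occ_le_card _ _).trans (card_expansions_le.trans_eq (by rw [card_padVars]))
  · simp only [not_exists] at hpad
    simp [hzero _ (hpad _)]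

lemma isKCNF_thresholdCNF {k : ℕ} (hf : ∀ i, f i ⊆ range n) (hfk : ∀ i, (f i).card + m = k)
    (hgk : ∀ j, (g j).card = k) : IsKCNF k (thresholdCNF n m f g) := by
  intro C hC
  rcases mem_union.1 hC with hC | hC
  · obtain ⟨j, -, rfl⟩ := mem_image.1 hC
    exact ⟨(card_litClause _ _).trans (hgk j), clauseValid_litClause _ _⟩
  · obtain ⟨i, -, hC⟩ := mem_biUnion.1 hC
    have hdisj := posVars_disjoint_padVars (m := m) hf i
    refine ⟨?_, clauseValid_of_mem_expansions (clauseValid_litClause _ _) hdisj hC⟩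
    rw [card_of_mem_expansions hdisj hC, card_litClause, card_padVars, hfk i]

lemma not_satisfiable_thresholdCNF (hg : ∀ j, g j ⊆ range n)
    (hcover : ∀ S ⊆ range n, (∃ i, f i ⊆ S) ∨ ∃ j, Disjoint (g j) S) :
    ¬ Satisfiable (thresholdCNF n m f g) := by
  rintro ⟨α, hα⟩
  rcases hcover ((range n).filter (α · = false)) (filter_subset _ _) with
    ⟨i, hi⟩ | ⟨j, hj⟩
  · obtain ⟨u, hu, hαu⟩ := satC_of_forall_mem_expansions fun D hD =>
      hα D (mem_union_right _ (mem_biUnion.2 ⟨i, mem_univ _, hD⟩))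
    obtain ⟨hx, hb⟩ := mem_litClause.1 hu
    exact Bool.noConfusion ((mem_filter.1 (hi hx)).2.symm.trans (hαu.trans hb))
  · obtain ⟨u, hu, hαu⟩ := hα _ (mem_union_left _ (mem_image_of_mem _ (mem_univ j)))
    obtain ⟨hx, hb⟩ := mem_litClause.1 hu
    exact disjoint_left.1 hj hx (mem_filter.2 ⟨hg j hx, hαu.trans hb⟩)

lemma occ_mul_occ_thresholdCNF_le (hf : ∀ i, f i ⊆ range n) (hg : ∀ j, g j ⊆ range n)
    (x : Var) :
    occ (thresholdCNF n m f g) (x, true) * occ (thresholdCNF n m f g) (x, false)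
      ≤ P * 2 ^ m * N + 2 ^ m * 2 ^ m := by
  have hsplit (b : Bool) : occ (thresholdCNF n m f g) (x, b)
      ≤ occ (negClauses g) (x, b) + occ (paddedPosClauses n m f) (x, b) :=
    occ_union_le _ _ _
  rcases lt_or_ge x n with hx | hx
  · have htrue : occ (thresholdCNF n m f g) (x, true) ≤ P * 2 ^ m := by
      refine (hsplit true).trans ?_
      rw [occ_negClauses_true, zero_add]
      exact (occ_le_card _ _).trans card_paddedPosClauses_le
    have hfalse : occ (thresholdCNF n m f g) (x, false) ≤ N := by
      refine (hsplit false).trans ?_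
      rw [occ_paddedPosClauses_false fun i h => (le_of_mem_padVars h).not_gt hx, add_zero]
      exact (occ_le_card _ _).trans card_negClauses_le
    exact (Nat.mul_le_mul htrue hfalse).trans (Nat.le_add_right _ _)
  · have hpad (b : Bool) : occ (thresholdCNF n m f g) (x, b) ≤ 2 ^ m := by
      refine (hsplit b).trans ?_
      rw [occ_negClauses_eq_zero hg hx, zero_add]
      exact occ_paddedPosClauses_le hf hx b
    exact (Nat.mul_le_mul (hpad true) (hpad false)).trans (Nat.le_add_left _ _)

end Construction

section HittingFamilies

/-- Union bound over `B`: among the `#T ^ K` tuples in `T`, each `b` rules out at most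
`(#T - c) ^ K`. -/
lemma exists_forall_exists_of_card_mul_lt {α β : Type*} (T : Finset α) (B : Finset β)
    (good : β → α → Prop) [∀ b, DecidablePred (good b)] {c K : ℕ}
    (hc : ∀ b ∈ B, c ≤ (T.filter (good b)).card)
    (hK : B.card * (T.card - c) ^ K < T.card ^ K) :
    ∃ f : Fin K → α, (∀ i, f i ∈ T) ∧ ∀ b ∈ B, ∃ i, good b (f i) := by
  set bad : β → Finset (Fin K → α) :=
    fun b => Fintype.piFinset fun _ => T.filter fun a => ¬ good b a
  have hbad : (B.biUnion bad).card < (Fintype.piFinset fun _ : Fin K => T).card := by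
    rw [Fintype.card_piFinset_const]
    refine lt_of_le_of_lt (card_biUnion_le.trans ?_) hK
    refine (sum_le_sum fun b hb => ?_).trans_eq (sum_const_nat fun _ _ => rfl)
    rw [Fintype.card_piFinset_const]
    refine Nat.pow_le_pow_left ?_ K
    have := card_filter_add_card_filter_not (s := T) (p := good b)
    have := hc b hb
    omega
  obtain ⟨f, hfT, hfbad⟩ := exists_mem_notMem_of_card_lt_card hbad
  refine ⟨f, Fintype.mem_piFinset.1 hfT, fun b hb => ?_⟩
  by_contra! hnot
  exact hfbad (mem_biUnion.2 ⟨b, hb, Fintype.mem_piFinset.2 fun i =>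
    mem_filter.2 ⟨Fintype.mem_piFinset.1 hfT i, hnot i⟩⟩)

lemma two_pow_mul_sub_pow_lt_pow {M c K n : ℕ} (hc : 0 < c) (hcM : c ≤ M)
    (hK : (n + 2) * M ≤ c * K) : 2 ^ n * (M - c) ^ K < M ^ K := by
  have hM : (0 : ℝ) < M := by exact_mod_cast hc.trans_le hcM
  have hsub : ((M - c : ℕ) : ℝ) ≤ M * Real.exp (-(c / M)) := by
    have := Real.one_sub_le_exp_neg ((c : ℝ) / M)
    rw [Nat.cast_sub hcM]
    calc (M : ℝ) - c = M * (1 - c / M) := by field_simp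
      _ ≤ M * Real.exp (-(c / M)) := by gcongr
  have hexp : (K : ℝ) * (c / M) ≥ n + 2 := by
    rw [ge_iff_le, mul_div_assoc', le_div_iff₀ hM]
    exact_mod_cast (hK.trans_eq (mul_comm _ _))
  have htwo : (2 : ℝ) ^ n * Real.exp (-(n + 2)) < 1 := by
    have h2e : (2 : ℝ) ^ n ≤ Real.exp n := by
      rw [← Real.exp_one_pow]
      exact pow_le_pow_left₀ (by norm_num) (by linarith [Real.exp_one_gt_d9]) n
    calc (2 : ℝ) ^ n * Real.exp (-(n + 2)) ≤ Real.exp n * Real.exp (-(n + 2)) := by gcongr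
      _ = Real.exp (-2) := by rw [← Real.exp_add]; ring_nf
      _ < 1 := Real.exp_lt_one_iff.2 (by norm_num)
  suffices h : (2 : ℝ) ^ n * ((M - c : ℕ) : ℝ) ^ K < (M : ℝ) ^ K by exact_mod_cast h
  calc (2 : ℝ) ^ n * ((M - c : ℕ) : ℝ) ^ K
      ≤ 2 ^ n * (M ^ K * Real.exp (-(K * (c / M)))) := by
        rw [neg_mul_eq_mul_neg, Real.exp_nat_mul, ← mul_pow]
        gcongr
    _ ≤ 2 ^ n * (M ^ K * Real.exp (-(n + 2))) := by gcongr
    _ = M ^ K * (2 ^ n * Real.exp (-(n + 2))) := by ring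
    _ < M ^ K * 1 := by gcongr
    _ = M ^ K := mul_one _

lemma exists_family_of_le_card_filter {α β : Type*} (T : Finset α) (B : Finset β)
    (good : β → α → Prop) [∀ b, DecidablePred (good b)] {n c : ℕ} (hB : B.card ≤ 2 ^ n)
    (hc : 0 < c) (hcT : c ≤ T.card) (hgood : ∀ b ∈ B, c ≤ (T.filter (good b)).card) :
    ∃ f : Fin ((n + 2) * (T.card / c + 1)) → α,
      (∀ i, f i ∈ T) ∧ ∀ b ∈ B, ∃ i, good b (f i) := by
  refine exists_forall_exists_of_card_mul_lt T B good hgood ?_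
  refine lt_of_le_of_lt (Nat.mul_le_mul_right _ hB) (two_pow_mul_sub_pow_lt_pow hc hcT ?_)
  calc (n + 2) * T.card ≤ (n + 2) * (c * (T.card / c + 1)) :=
        Nat.mul_le_mul_left _ (Nat.lt_mul_div_succ _ hc).le
    _ = c * ((n + 2) * (T.card / c + 1)) := by ring

/-- The number of `l`-subsets of `range n` that the union bound needs when every bad event
is avoided by at least `m.choose l` of them. -/
def familySize (n m l : ℕ) : ℕ := (n + 2) * (n.choose l / m.choose l + 1)

lemma exists_family_subset {n m l : ℕ} (hlm : l ≤ m) (hmn : m ≤ n) :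
    ∃ f : Fin (familySize n m l) → Finset ℕ, (∀ i, f i ∈ powersetCard l (range n)) ∧
      ∀ S ⊆ range n, m ≤ S.card → ∃ i, f i ⊆ S := by
  have h := exists_family_of_le_card_filter (powersetCard l (range n))
    ((range n).powerset.filter (m ≤ ·.card)) (fun S A => A ⊆ S) (n := n)
    ((card_filter_le _ _).trans (by rw [card_powerset, card_range]))
    (Nat.choose_pos hlm)
    (by rw [card_powersetCard, card_range]; exact Nat.choose_le_choose l hmn)
    (fun S hS => by
      obtain ⟨hS, hmS⟩ := mem_filter.1 hS
      refine (Nat.choose_le_choose l hmS).trans ?_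
      rw [← card_powersetCard]
      refine card_le_card fun A hA => ?_
      obtain ⟨hAS, hA⟩ := mem_powersetCard.1 hA
      exact mem_filter.2 ⟨mem_powersetCard.2 ⟨hAS.trans (mem_powerset.1 hS), hA⟩, hAS⟩)
  rw [card_powersetCard, card_range] at h
  obtain ⟨f, hfT, hf⟩ := h
  exact ⟨f, hfT, fun S hS hmS => hf S (mem_filter.2 ⟨mem_powerset.2 hS, hmS⟩)⟩

lemma exists_family_disjoint {n m k : ℕ} (hkm : k ≤ m) (hmn : m ≤ n) :
    ∃ g : Fin (familySize n m k) → Finset ℕ, (∀ j, g j ∈ powersetCard k (range n)) ∧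
      ∀ S ⊆ range n, S.card + m ≤ n → ∃ j, Disjoint (g j) S := by
  have h := exists_family_of_le_card_filter (powersetCard k (range n))
    ((range n).powerset.filter (·.card + m ≤ n)) (fun S A => Disjoint A S) (n := n)
    ((card_filter_le _ _).trans (by rw [card_powerset, card_range]))
    (Nat.choose_pos hkm)
    (by rw [card_powersetCard, card_range]; exact Nat.choose_le_choose k hmn)
    (fun S hS => by
      obtain ⟨hS, hmS⟩ := mem_filter.1 hS
      refine (Nat.choose_le_choose k (by omega : m ≤ n - S.card)).trans ?_
      rw [show n - S.card = (range n \ S).card by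
        rw [card_sdiff_of_subset (mem_powerset.1 hS), card_range], ← card_powersetCard]
      refine card_le_card fun A hA => ?_
      obtain ⟨hAS, hA⟩ := mem_powersetCard.1 hA
      obtain ⟨hAn, hdisj⟩ := subset_sdiff.1 hAS
      exact mem_filter.2 ⟨mem_powersetCard.2 ⟨hAn, hA⟩, hdisj⟩)
  rw [card_powersetCard, card_range] at h
  obtain ⟨g, hgT, hg⟩ := h
  exact ⟨g, hgT, fun S hS hmS => hg S (mem_filter.2 ⟨mem_powerset.2 hS, hmS⟩)⟩

end HittingFamilies

section Estimates

lemma choose_mul_pow_le_pow_mul_choose (n m l : ℕ) :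
    n.choose l * (m + 1 - l) ^ l ≤ n ^ l * m.choose l := by
  refine Nat.le_of_mul_le_mul_left ?_ (Nat.factorial_pos l)
  calc l.factorial * (n.choose l * (m + 1 - l) ^ l)
      = n.descFactorial l * (m + 1 - l) ^ l := by
        rw [Nat.descFactorial_eq_factorial_mul_choose]; ring
    _ ≤ n ^ l * m.descFactorial l :=
        Nat.mul_le_mul (Nat.descFactorial_le_pow n l) (Nat.pow_sub_le_descFactorial m l)
    _ = l.factorial * (n ^ l * m.choose l) := by
        rw [Nat.descFactorial_eq_factorial_mul_choose]; ring

lemma familySize_le {n m l : ℕ} (hlm : l ≤ m) (hmn : m ≤ n) :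
    (familySize n m l : ℝ) ≤ 2 * (n + 2) * (n / (m + 1 - l)) ^ l := by
  have hm : 0 < m.choose l := Nat.choose_pos hlm
  have hmR : (0 : ℝ) < m.choose l := by exact_mod_cast hm
  have hq : 1 ≤ n.choose l / m.choose l :=
    Nat.div_pos (Nat.choose_le_choose l hmn) hm
  have hratio : (n.choose l : ℝ) / m.choose l ≤ (n / (m + 1 - l)) ^ l := by
    have hD : (0 : ℝ) < m + 1 - l := by
      have : (l : ℝ) ≤ m := by exact_mod_cast hlm
      linarith
    rw [div_pow, div_le_div_iff₀ hmR (pow_pos hD l)]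
    have := choose_mul_pow_le_pow_mul_choose n m l
    have hcast : ((m + 1 - l : ℕ) : ℝ) = m + 1 - l := by
      rw [Nat.cast_sub (by omega)]; push_cast; ring
    rw [← hcast]
    exact_mod_cast this
  calc (familySize n m l : ℝ) = (n + 2) * ((n.choose l / m.choose l : ℕ) + 1 : ℝ) := by
        simp [familySize]
    _ ≤ (n + 2) * (2 * (n.choose l / m.choose l : ℕ) : ℝ) := by
        gcongr
        have : (1 : ℝ) ≤ (n.choose l / m.choose l : ℕ) := by exact_mod_cast hq
        linarith
    _ ≤ (n + 2) * (2 * (n / (m + 1 - l)) ^ l) := by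
        gcongr
        exact Nat.cast_div_le.trans hratio
    _ = 2 * (n + 2) * (n / (m + 1 - l)) ^ l := by ring

lemma one_add_inv_pow_le_exp_one {k l : ℕ} (hl : l ≤ k) :
    (1 + 1 / k : ℝ) ^ l ≤ Real.exp 1 := by
  calc (1 + 1 / k : ℝ) ^ l ≤ Real.exp (1 / k) ^ l := by
        gcongr
        linarith [Real.add_one_le_exp (1 / k : ℝ)]
    _ = Real.exp (l / k) := by rw [← Real.exp_nat_mul]; ring_nf
    _ ≤ Real.exp 1 := by
        gcongr
        rcases Nat.eq_zero_or_pos k with rfl | hk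
        · simp
        · exact div_le_one_of_le₀ (by exact_mod_cast hl) (Nat.cast_nonneg k)

lemma mul_sq_div_le {a b k l m : ℕ} (hb : 1 ≤ b) (hk : 1 ≤ k) (hl : l ≤ k)
    (hm : b * k ^ 2 ≤ m) : (a * k ^ 2 : ℝ) / (m + 1 - l) ≤ a / b * (1 + 1 / k) := by
  have hbR : (1 : ℝ) ≤ b := by exact_mod_cast hb
  have hkR : (1 : ℝ) ≤ k := by exact_mod_cast hk
  have hlR : (l : ℝ) ≤ k := by exact_mod_cast hl
  have hmR : (b * k ^ 2 : ℝ) ≤ m := by exact_mod_cast hm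
  have hD : (k : ℝ) * (k - 1) ≤ m + 1 - l := by nlinarith
  have hDpos : (0 : ℝ) < m + 1 - l := by nlinarith
  have key : (b * k ^ 2 : ℝ) ≤ (1 + 1 / k) * (m + 1 - l) := by
    have : (k : ℝ) - 1 ≤ (m + 1 - l) / k := by
      rw [le_div_iff₀ (by positivity)]
      linarith
    rw [add_mul, one_mul, one_div_mul_eq_div]
    nlinarith
  rw [div_le_iff₀ hDpos]
  calc (a * k ^ 2 : ℝ) = a / b * (b * k ^ 2) := by field_simp
    _ ≤ a / b * ((1 + 1 / k) * (m + 1 - l)) := by gcongr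
    _ = a / b * (1 + 1 / k) * (m + 1 - l) := by ring

lemma familySize_mul_sq_le {a b k l m : ℕ} (hb : 1 ≤ b) (hk : 1 ≤ k) (hl : l ≤ k)
    (hm : b * k ^ 2 ≤ m) (hma : m ≤ a * k ^ 2) :
    (familySize (a * k ^ 2) m l : ℝ) ≤ 2 * Real.exp 1 * (a * k ^ 2 + 2) * (a / b) ^ l := by
  have hlm : l ≤ m := hl.trans ((Nat.le_self_pow two_ne_zero k).trans
    ((Nat.le_mul_of_pos_left _ hb).trans hm))
  calc (familySize (a * k ^ 2) m l : ℝ)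
      ≤ 2 * (a * k ^ 2 + 2) * ((a * k ^ 2 : ℝ) / (m + 1 - l)) ^ l := by
        exact_mod_cast familySize_le hlm hma
    _ ≤ 2 * (a * k ^ 2 + 2) * (a / b * (1 + 1 / k)) ^ l := by
        gcongr
        · have : (l : ℝ) ≤ m := by exact_mod_cast hlm
          exact div_nonneg (by positivity) (by linarith)
        · exact mul_sq_div_le hb hk hl hm
    _ = 2 * (a * k ^ 2 + 2) * (a / b) ^ l * (1 + 1 / k) ^ l := by rw [mul_pow]; ring
    _ ≤ 2 * (a * k ^ 2 + 2) * (a / b) ^ l * Real.exp 1 := by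
        gcongr
        exact one_add_inv_pow_le_exp_one hl
    _ = 2 * Real.exp 1 * (a * k ^ 2 + 2) * (a / b) ^ l := by ring

end Estimates

section Parameters

open Filter

def posWidth (k : ℕ) : ℕ := (7 * k + 33) / 34

lemma posWidth_le {k : ℕ} (hk : 2 ≤ k) : posWidth k ≤ k := by
  unfold posWidth; omega

lemma four_pow_sub_posWidth_le (k : ℕ) : (4 : ℝ) ^ (k - posWidth k) ≤ 3.01 ^ k := by
  have h : 34 * (k - posWidth k) ≤ 27 * k := by unfold posWidth; omega
  refine le_of_pow_le_pow_left₀ (n := 34) (by norm_num) (by positivity) ?_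
  calc ((4 : ℝ) ^ (k - posWidth k)) ^ 34 = 4 ^ (34 * (k - posWidth k)) := by
        rw [← pow_mul, mul_comm]
    _ ≤ 4 ^ (27 * k) := pow_le_pow_right₀ (by norm_num) h
    _ = (4 ^ 27) ^ k := pow_mul _ _ _
    _ ≤ (3.01 ^ 34) ^ k := by gcongr; norm_num
    _ = (3.01 ^ k) ^ 34 := by rw [← pow_mul, ← pow_mul, mul_comm]

lemma eventually_mul_pow_le_pow (c : ℝ) (d : ℕ) {q r : ℝ} (hq : 0 ≤ q) (hqr : q < r) :
    ∀ᶠ k : ℕ in atTop, c * k ^ d * q ^ k ≤ r ^ k := by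
  have hr : 0 < r := hq.trans_lt hqr
  have hqr' : |q / r| < 1 := by
    rw [abs_of_nonneg (by positivity)]
    exact (div_lt_one hr).2 hqr
  have h := (tendsto_pow_const_mul_const_pow_of_abs_lt_one d hqr').const_mul c
  rw [mul_zero] at h
  filter_upwards [h.eventually (ge_mem_nhds one_pos)] with k hk
  calc c * k ^ d * q ^ k = c * (k ^ d * (q / r) ^ k) * r ^ k := by
        rw [div_pow]; field_simp
    _ ≤ 1 * r ^ k := by gcongr
    _ = r ^ k := one_mul _

lemma eventually_mul_sq_mul_pow_le (c : ℝ) :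
    ∀ᶠ k : ℕ in atTop,
      c * (41 * k ^ 2 + 2) ^ 2 * ((41 / 14) ^ posWidth k * (41 / 17) ^ k) ≤ (3.01 : ℝ) ^ k := by
  -- In 34th powers the rate `(41/14)^(7/34) · 41/17` becomes rational: `(41/14)^7 · (41/17)^34`.
  filter_upwards [eventually_mul_pow_le_pow (c ^ 34 * 43 ^ 68 * (41 / 14) ^ 33) 136
    (q := (41 / 14) ^ 7 * (41 / 17) ^ 34) (r := 3.01 ^ 34) (by positivity) (by norm_num),
    eventually_ge_atTop 1] with k hk hk1
  have hwidth : ((41 / 14 : ℝ) ^ posWidth k) ^ 34 ≤ (41 / 14) ^ (7 * k + 33) := by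
    rw [← pow_mul]
    exact pow_le_pow_right₀ (by norm_num) (by unfold posWidth; omega)
  have hpoly : (41 * (k : ℝ) ^ 2 + 2) ^ 2 ≤ (43 * k ^ 2) ^ 2 := by
    have : (1 : ℝ) ≤ k := by exact_mod_cast hk1
    gcongr
    nlinarith
  refine le_of_pow_le_pow_left₀ (n := 34) (by norm_num) (by positivity) ?_
  calc (c * (41 * k ^ 2 + 2) ^ 2 * ((41 / 14) ^ posWidth k * (41 / 17) ^ k)) ^ 34
      = c ^ 34 * ((41 * k ^ 2 + 2) ^ 2) ^ 34 * ((41 / 14) ^ posWidth k) ^ 34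
          * ((41 / 17) ^ k) ^ 34 := by simp only [mul_pow, mul_assoc]
    _ ≤ c ^ 34 * ((43 * k ^ 2) ^ 2) ^ 34 * (41 / 14) ^ (7 * k + 33) * ((41 / 17) ^ k) ^ 34 := by
        gcongr
    _ = c ^ 34 * 43 ^ 68 * (41 / 14) ^ 33 * k ^ 136 * ((41 / 14) ^ 7 * (41 / 17) ^ 34) ^ k := by
        rw [pow_add, pow_mul, ← pow_mul (41 / 17 : ℝ) k 34, mul_comm k 34, pow_mul,
          mul_pow ((41 / 14 : ℝ) ^ 7)]
        generalize ((41 / 14 : ℝ) ^ 7) ^ k = u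
        generalize ((41 / 17 : ℝ) ^ 34) ^ k = v
        ring
    _ ≤ (3.01 ^ 34) ^ k := hk
    _ = (3.01 ^ k) ^ 34 := by rw [← pow_mul, ← pow_mul, mul_comm]

lemma familySize_mul_familySize_le {k : ℕ} (hk : 2 ≤ k) :
    ((familySize (41 * k ^ 2) (7 * k ^ 2) (posWidth k) * 2 ^ (k - posWidth k)
        * familySize (41 * k ^ 2) (34 * k ^ 2 + 1) k : ℕ) : ℝ)
      ≤ 4 * Real.exp 1 ^ 2 * (41 * k ^ 2 + 2) ^ 2 * ((41 / 14) ^ posWidth k * (41 / 17) ^ k) := by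
  set l := posWidth k
  have hl : l ≤ k := posWidth_le hk
  have hk2 : 1 ≤ k ^ 2 := Nat.one_le_pow _ _ (by omega)
  have hP := familySize_mul_sq_le (a := 41) (b := 7) (k := k) (m := 7 * k ^ 2) (by norm_num)
    (by omega) hl le_rfl (by omega)
  have hN := familySize_mul_sq_le (a := 41) (b := 34) (k := k) (m := 34 * k ^ 2 + 1) (by norm_num)
    (by omega) le_rfl (by omega) (by omega)
  push_cast at hP hN ⊢
  have hrate :
      (41 / 7 : ℝ) ^ l * 2 ^ (k - l) * (41 / 34) ^ k = (41 / 14) ^ l * (41 / 17) ^ k := by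
    calc (41 / 7 : ℝ) ^ l * 2 ^ (k - l) * (41 / 34) ^ k
        = (41 / 14) ^ l * (2 ^ l * 2 ^ (k - l)) * (41 / 34) ^ k := by
          rw [show (41 / 7 : ℝ) = 41 / 14 * 2 by norm_num, mul_pow]; ring
      _ = (41 / 14) ^ l * (41 / 17) ^ k := by
          rw [← pow_add, Nat.add_sub_cancel' hl, mul_assoc, ← mul_pow]; norm_num
  calc (familySize (41 * k ^ 2) (7 * k ^ 2) l : ℝ) * 2 ^ (k - l)
        * familySize (41 * k ^ 2) (34 * k ^ 2 + 1) k
      ≤ (2 * Real.exp 1 * (41 * k ^ 2 + 2) * (41 / 7) ^ l) * 2 ^ (k - l)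
          * (2 * Real.exp 1 * (41 * k ^ 2 + 2) * (41 / 34) ^ k) := by gcongr
    _ = 4 * Real.exp 1 ^ 2 * (41 * k ^ 2 + 2) ^ 2
          * ((41 / 7) ^ l * 2 ^ (k - l) * (41 / 34) ^ k) := by ring
    _ = 4 * Real.exp 1 ^ 2 * (41 * k ^ 2 + 2) ^ 2 * ((41 / 14) ^ l * (41 / 17) ^ k) := by
        rw [hrate]

lemma exists_thresholdCNF {k : ℕ} (hk : 2 ≤ k) :
    ∃ F : CNF, IsKCNF k F ∧ ¬ Satisfiable F ∧ ∀ x : Var,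
      occ F (x, true) * occ F (x, false) ≤
        familySize (41 * k ^ 2) (7 * k ^ 2) (posWidth k) * 2 ^ (k - posWidth k)
          * familySize (41 * k ^ 2) (34 * k ^ 2 + 1) k + 4 ^ (k - posWidth k) := by
  have hl := posWidth_le hk
  have hk2 : k ≤ k ^ 2 := Nat.le_self_pow two_ne_zero k
  obtain ⟨f, hfT, hf⟩ :=
    exists_family_subset (n := 41 * k ^ 2) (m := 7 * k ^ 2) (l := posWidth k) (by omega) (by omega)
  obtain ⟨g, hgT, hg⟩ := exists_family_disjoint (n := 41 * k ^ 2) (m := 34 * k ^ 2 + 1) (k := k)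
    (by omega) (by omega)
  have hfn (i) : f i ⊆ range (41 * k ^ 2) := (mem_powersetCard.1 (hfT i)).1
  have hgn (j) : g j ⊆ range (41 * k ^ 2) := (mem_powersetCard.1 (hgT j)).1
  refine ⟨thresholdCNF (41 * k ^ 2) (k - posWidth k) f g,
    isKCNF_thresholdCNF hfn (fun i => by rw [(mem_powersetCard.1 (hfT i)).2]; omega)
      (fun j => (mem_powersetCard.1 (hgT j)).2),
    not_satisfiable_thresholdCNF hgn fun S hS => ?_,
    fun x => (occ_mul_occ_thresholdCNF_le hfn hgn x).trans_eq (by rw [← mul_pow]; norm_num)⟩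
  by_cases hS' : 7 * k ^ 2 ≤ S.card
  · exact Or.inl (hf S hS hS')
  · exact Or.inr (hg S hS (by omega))

end Parameters

/-- There are unsatisfiable `k`-CNF formulas with `occ_F(x) · occ_F(x̄) ∈ O(3.01^k)`
for all variables `x`. -/
theorem stmt15 :
    ∃ C : ℝ, ∃ k₀ : ℕ, ∀ k ≥ k₀, ∃ F : CNF, IsKCNF k F ∧ ¬ Satisfiable F ∧
      ∀ x : Var, (occ F (x, true) * occ F (x, false) : ℝ) ≤ C * 3.01 ^ k := by
  obtain ⟨k₀, hk₀⟩ := Filter.eventually_atTop.1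
    (eventually_mul_sq_mul_pow_le (4 * Real.exp 1 ^ 2))
  refine ⟨2, max k₀ 2, fun k hk => ?_⟩
  have hk2 : 2 ≤ k := le_of_max_le_right hk
  obtain ⟨F, hF, hunsat, hocc⟩ := exists_thresholdCNF hk2
  refine ⟨F, hF, hunsat, fun x => ?_⟩
  calc (occ F (x, true) * occ F (x, false) : ℝ)
      ≤ ((familySize (41 * k ^ 2) (7 * k ^ 2) (posWidth k) * 2 ^ (k - posWidth k)
          * familySize (41 * k ^ 2) (34 * k ^ 2 + 1) k : ℕ) : ℝ) + 4 ^ (k - posWidth k) := by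
        exact_mod_cast hocc x
    _ ≤ 3.01 ^ k + 3.01 ^ k :=
        add_le_add ((familySize_mul_familySize_le hk2).trans (hk₀ k (le_of_max_le_left hk)))
          (four_pow_sub_posWidth_le k)
    _ = 2 * 3.01 ^ k := by ring
end
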